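/- arXiv:2509.25153 — 2 statements merged into one kernel-verified Lean document; each statement's English description precedes it below -/
import Mathlib

section
/- Let u be a real, integrable random variable and b ∈ ℝ. Set ū = max(u, -b). Then E[Φ(-u - b)] ≥ Φ(-E[ū] - b), where Φ is the standard normal CDF. -/
open MeasureTheory

noncomputable def stdNormalCDF (x : ℝ) : ℝ :=
  ∫ u in Set.Iic x, (Real.sqrt (2 * Real.pi))⁻¹ * Real.exp (-u ^ 2 / 2)

/-!
Since `x ↦ Φ(-x - b)` is non-increasing, replacing `u` by `ū = max u (-b) ≥ u` can only lower
`E[Φ(-u - b)]`. On `[-b, ∞)` the map is convex, because `Φ` is convex on `(-∞, 0]` where the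
Gaussian density increases; Jensen's inequality for `ū`, which takes values there, finishes.
-/

open Set ProbabilityTheory

section IntegralIic

variable {f : ℝ → ℝ}

theorem hasDerivAt_integral_Iic (hf : Continuous f) (hfi : Integrable f) (x : ℝ) :
    HasDerivAt (fun y ↦ ∫ t in Iic y, f t) (f x) x := by
  have hsplit : (fun y ↦ ∫ t in Iic y, f t) =
      fun y ↦ (∫ t in Iic 0, f t) + ∫ t in (0 : ℝ)..y, f t :=
    funext fun y ↦ by
      rw [← intervalIntegral.integral_Iic_sub_Iic hfi.integrableOn hfi.integrableOn]
      ring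
  rw [hsplit]
  exact (intervalIntegral.integral_hasDerivAt_right hfi.intervalIntegrable
    (hf.stronglyMeasurableAtFilter _ _) hf.continuousAt).const_add _

theorem continuous_integral_Iic (hf : Continuous f) (hfi : Integrable f) :
    Continuous fun y ↦ ∫ t in Iic y, f t :=
  continuous_iff_continuousAt.2 fun x ↦ (hasDerivAt_integral_Iic hf hfi x).continuousAt

theorem MonotoneOn.convexOn_integral_Iic {D : Set ℝ} (hD : Convex ℝ D) (hf : Continuous f)
    (hfi : Integrable f) (hmono : MonotoneOn f D) :
    ConvexOn ℝ D fun y ↦ ∫ t in Iic y, f t := by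
  have hderiv : deriv (fun y ↦ ∫ t in Iic y, f t) = f :=
    funext fun x ↦ (hasDerivAt_integral_Iic hf hfi x).deriv
  refine MonotoneOn.convexOn_of_deriv hD (continuous_integral_Iic hf hfi).continuousOn
    (fun x _ ↦ (hasDerivAt_integral_Iic hf hfi x).differentiableAt.differentiableWithinAt) ?_
  rw [hderiv]
  exact hmono.mono interior_subset

theorem monotone_integral_Iic_of_nonneg (hf : 0 ≤ f) (hfi : Integrable f) :
    Monotone fun y ↦ ∫ t in Iic y, f t := fun _ _ hxy ↦
  setIntegral_mono_set hfi.integrableOn (.of_forall hf) (Iic_subset_Iic.2 hxy).eventuallyLE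

end IntegralIic

theorem ProbabilityTheory.continuous_gaussianPDFReal (μ : ℝ) (v : NNReal) :
    Continuous (gaussianPDFReal μ v) := by
  unfold gaussianPDFReal
  fun_prop

theorem ProbabilityTheory.monotoneOn_gaussianPDFReal (μ : ℝ) (v : NNReal) :
    MonotoneOn (gaussianPDFReal μ v) (Iic μ) := by
  intro x hx y hy hxy
  refine mul_le_mul_of_nonneg_left (Real.exp_le_exp.2 ?_) (by positivity)
  exact div_le_div_of_nonneg_right (by nlinarith [mem_Iic.1 hx, mem_Iic.1 hy]) (by positivity)

theorem stdNormalCDF_eq_integral_gaussianPDFReal :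
    stdNormalCDF = fun x ↦ ∫ t in Iic x, gaussianPDFReal 0 1 t := by
  ext x
  simp [stdNormalCDF, gaussianPDFReal]

theorem continuous_stdNormalCDF : Continuous stdNormalCDF := by
  rw [stdNormalCDF_eq_integral_gaussianPDFReal]
  exact continuous_integral_Iic (continuous_gaussianPDFReal 0 1) (integrable_gaussianPDFReal 0 1)

theorem monotone_stdNormalCDF : Monotone stdNormalCDF := by
  rw [stdNormalCDF_eq_integral_gaussianPDFReal]
  exact monotone_integral_Iic_of_nonneg (gaussianPDFReal_nonneg 0 1)
    (integrable_gaussianPDFReal 0 1)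

theorem abs_stdNormalCDF_le_one (x : ℝ) : |stdNormalCDF x| ≤ 1 := by
  rw [stdNormalCDF_eq_integral_gaussianPDFReal, abs_of_nonneg
    (setIntegral_nonneg measurableSet_Iic fun t _ ↦ gaussianPDFReal_nonneg 0 1 t),
    ← integral_gaussianPDFReal_eq_one 0 one_ne_zero]
  exact setIntegral_le_integral (integrable_gaussianPDFReal 0 1)
    (.of_forall (gaussianPDFReal_nonneg 0 1))

theorem convexOn_stdNormalCDF_Iic : ConvexOn ℝ (Iic 0) stdNormalCDF := by
  rw [stdNormalCDF_eq_integral_gaussianPDFReal]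
  exact (monotoneOn_gaussianPDFReal 0 1).convexOn_integral_Iic (convex_Iic 0)
    (continuous_gaussianPDFReal 0 1) (integrable_gaussianPDFReal 0 1)

theorem convexOn_stdNormalCDF_neg_sub (b : ℝ) :
    ConvexOn ℝ (Ici (-b)) fun x ↦ stdNormalCDF (-x - b) := by
  refine ⟨convex_Ici _, fun x hx y hy s t hs ht hst ↦ ?_⟩
  have h := convexOn_stdNormalCDF_Iic.2 (x := -x - b) (y := -y - b)
    (by simp at hx ⊢; linarith) (by simp at hy ⊢; linarith) hs ht hst
  convert h using 2
  simp only [smul_eq_mul]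
  linear_combination b * hst

theorem ConvexOn.map_integral_max_le {Ω : Type*} [MeasurableSpace Ω] {μ : Measure Ω}
    [IsProbabilityMeasure μ] {g : ℝ → ℝ} {c C : ℝ} (hconv : ConvexOn ℝ (Ici c) g)
    (hanti : Antitone g) (hcont : Continuous g) (hbdd : ∀ x, |g x| ≤ C) {u : Ω → ℝ}
    (hu : Integrable u μ) :
    g (∫ ω, max (u ω) c ∂μ) ≤ ∫ ω, g (u ω) ∂μ := by
  have hint (v : Ω → ℝ) (hv : AEMeasurable v μ) : Integrable (fun ω ↦ g (v ω)) μ :=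
    .of_bound (hcont.measurable.comp_aemeasurable hv).aestronglyMeasurable C
      (.of_forall fun ω ↦ hbdd (v ω))
  have hmax : Integrable (fun ω ↦ max (u ω) c) μ := hu.sup (integrable_const c)
  calc g (∫ ω, max (u ω) c ∂μ)
      ≤ ∫ ω, g (max (u ω) c) ∂μ :=
        hconv.map_integral_le hcont.continuousOn isClosed_Ici
          (.of_forall fun ω ↦ mem_Ici.2 (le_max_right _ _)) hmax (hint _ hmax.aemeasurable)
    _ ≤ ∫ ω, g (u ω) ∂μ :=
        integral_mono (hint _ hmax.aemeasurable) (hint _ hu.aemeasurable)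
          fun ω ↦ hanti (le_max_left _ _)

/-- For an integrable real random variable `u` and `b ∈ ℝ`, with `ū = max(u, -b)`,
one has `E[Φ(-u-b)] ≥ Φ(-E[ū]-b)`. -/
theorem stmt_5 {Ω : Type*} [MeasurableSpace Ω] (μ : Measure Ω) [IsProbabilityMeasure μ]
    (u : Ω → ℝ) (hu : Integrable u μ) (b : ℝ) :
    stdNormalCDF (-(∫ ω, max (u ω) (-b) ∂μ) - b) ≤
      ∫ ω, stdNormalCDF (-(u ω) - b) ∂μ :=
  (convexOn_stdNormalCDF_neg_sub b).map_integral_max_le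
    (fun _ _ hxy ↦ monotone_stdNormalCDF (by linarith))
    (continuous_stdNormalCDF.comp (by fun_prop)) (fun _ ↦ abs_stdNormalCDF_le_one _) hu
end

section
/- Let φ: ℝ → ℝ⁺ be continuous, non-decreasing, with lim_{x→-∞} φ(x) = 0, lim_{x→∞} φ(x) = 1, and φ(0) > 0. Let g ~ N(0,1) and define f(β) = Var(g·φ(βg)) for β ≥ 0. Then inf_{β ≥ 0} f(β) > 0. -/
/-!
`g φ(βg)` is at least `φ(0)` when `g ≥ 1` (monotonicity) and at most `0` when `g ≤ 0`
(nonnegativity), whatever `β ≥ 0` is. A random variable that lies above `u` on one event and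
below `l` on another cannot concentrate near any single value: its distance to its mean is at
least `(u - l)/2` on one of the two events, so its variance is at least
`((u - l)/2)² · min(P(g ≥ 1), P(g ≤ 0))`, a bound independent of `β`.
-/

open MeasureTheory ProbabilityTheory Filter

section Variance

variable {Ω : Type*} {mΩ : MeasurableSpace Ω} {μ : Measure Ω} [IsFiniteMeasure μ]
  {X : Ω → ℝ} {s t : Set Ω} {u l : ℝ}

lemma sq_mul_measureReal_le_integral_sq_sub {c d : ℝ} (hX : MemLp X 2 μ) (hs : MeasurableSet s)
    (hd : 0 ≤ d) (hXs : ∀ ω ∈ s, d ≤ |X ω - c|) :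
    d ^ 2 * μ.real s ≤ ∫ ω, (X ω - c) ^ 2 ∂μ := by
  have hint : Integrable (fun ω => (X ω - c) ^ 2) μ := (hX.sub (memLp_const c)).integrable_sq
  calc d ^ 2 * μ.real s ≤ ∫ ω in s, (X ω - c) ^ 2 ∂μ :=
        setIntegral_ge_of_const_le_real hs (measure_ne_top μ s)
          (fun ω hω => (pow_le_pow_left₀ hd (hXs ω hω) 2).trans_eq (sq_abs _))
          hint.integrableOn
    _ ≤ ∫ ω, (X ω - c) ^ 2 ∂μ := setIntegral_le_integral hint (ae_of_all _ fun _ => sq_nonneg _)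

lemma sq_half_sub_mul_min_le_integral_sq_sub (c : ℝ) (hX : MemLp X 2 μ) (hs : MeasurableSet s)
    (ht : MeasurableSet t) (hlu : l ≤ u) (hXs : ∀ ω ∈ s, u ≤ X ω) (hXt : ∀ ω ∈ t, X ω ≤ l) :
    ((u - l) / 2) ^ 2 * min (μ.real s) (μ.real t) ≤ ∫ ω, (X ω - c) ^ 2 ∂μ := by
  have hd : 0 ≤ (u - l) / 2 := by linarith
  rcases le_or_gt c ((u + l) / 2) with hc | hc
  · refine (mul_le_mul_of_nonneg_left (min_le_left _ _) (sq_nonneg _)).trans ?_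
    refine sq_mul_measureReal_le_integral_sq_sub hX hs hd fun ω hω => ?_
    exact le_abs.2 (Or.inl (by linarith [hXs ω hω]))
  · refine (mul_le_mul_of_nonneg_left (min_le_right _ _) (sq_nonneg _)).trans ?_
    refine sq_mul_measureReal_le_integral_sq_sub hX ht hd fun ω hω => ?_
    exact le_abs.2 (Or.inr (by linarith [hXt ω hω]))

lemma sq_half_sub_mul_min_le_variance (hX : MemLp X 2 μ) (hs : MeasurableSet s)
    (ht : MeasurableSet t) (hlu : l ≤ u) (hXs : ∀ ω ∈ s, u ≤ X ω) (hXt : ∀ ω ∈ t, X ω ≤ l) :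
    ((u - l) / 2) ^ 2 * min (μ.real s) (μ.real t) ≤ variance X μ := by
  rw [variance_eq_integral hX.aemeasurable]
  exact sq_half_sub_mul_min_le_integral_sq_sub _ hX hs ht hlu hXs hXt

end Variance

lemma gaussianReal_real_pos {m : ℝ} {v : NNReal} (hv : v ≠ 0) {s : Set ℝ} (hs : volume s ≠ 0) :
    0 < (gaussianReal m v).real s :=
  ENNReal.toReal_pos (fun h => hs (gaussianReal_absolutelyContinuous' m hv h)) (measure_ne_top _ s)

theorem stmt_17_general (φ : ℝ → ℝ) (hmono : Monotone φ)
    (hnn : ∀ x, 0 ≤ φ x) (h0 : 0 < φ 0)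
    (htop : Tendsto φ atTop (nhds 1)) :
    0 < ⨅ β : {b : ℝ // 0 ≤ b},
        variance (fun x : ℝ => x * φ ((β : ℝ) * x)) (gaussianReal 0 1) := by
  set μ := gaussianReal 0 1
  have hφ_norm : ∀ x, ‖φ x‖ ≤ 1 := fun x =>
    (Real.norm_of_nonneg (hnn x)).trans_le (hmono.ge_of_tendsto htop x)
  have hbound : 0 < ((φ 0 - 0) / 2) ^ 2 * min (μ.real (Set.Ici 1)) (μ.real (Set.Iic 0)) := by
    have hIci := gaussianReal_real_pos (m := 0) one_ne_zero (s := Set.Ici 1) (by simp)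
    have hIic := gaussianReal_real_pos (m := 0) one_ne_zero (s := Set.Iic 0) (by simp)
    positivity
  refine hbound.trans_le (le_ciInf fun ⟨β, hβ⟩ => ?_)
  have hψ : Measurable fun x => φ (β * x) := hmono.measurable.comp (measurable_const_mul β)
  refine sq_half_sub_mul_min_le_variance
    ((memLp_top_of_bound hψ.aestronglyMeasurable 1 (ae_of_all _ fun x => hφ_norm _)).mul'
      (memLp_id_gaussianReal' 2 ENNReal.ofNat_ne_top))
    measurableSet_Ici measurableSet_Iic h0.le (fun x hx => ?_) (fun x hx => ?_)
  · have hx : (1 : ℝ) ≤ x := hx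
    calc φ 0 ≤ φ (β * x) := hmono (by positivity)
      _ ≤ x * φ (β * x) := le_mul_of_one_le_left (hnn _) hx
  · exact mul_nonpos_of_nonpos_of_nonneg hx (hnn _)

/-- For a continuous non-decreasing `φ : ℝ → ℝ⁺` with `φ(-∞) = 0`, `φ(∞) = 1`, `φ(0) > 0`,
and `g ~ N(0,1)`, the variance `f(β) = Var(g·φ(βg))` is bounded away from zero over `β ≥ 0`. -/
theorem stmt_17 (φ : ℝ → ℝ) (hcont : Continuous φ) (hmono : Monotone φ)
    (hnn : ∀ x, 0 ≤ φ x) (h0 : 0 < φ 0)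
    (hbot : Tendsto φ atBot (nhds 0)) (htop : Tendsto φ atTop (nhds 1)) :
    0 < ⨅ β : {b : ℝ // 0 ≤ b},
        variance (fun x : ℝ => x * φ ((β : ℝ) * x)) (gaussianReal 0 1) :=
  stmt_17_general φ hmono hnn h0 htop
end
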